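/- Verification of contract implementation: a system Σ in driving variable form implements a contract C = (A, G) if and only if there exists a linear subspace S ⊆ (X^a × X) × X^g satisfying conditions (12) diag(A∘, A^g) S ⊆ S + im diag(G∘, G^g); (13) (im G∘ ∩ V∘,*) × {0} ⊆ S + ({0} × (im G^g ∩ V^{g,*})); (14) S ⊆ ker H∘ × ker H^g intersected with {((x∘, x^g)) : C∘ x∘ = C^g x^g}; and in addition π_{X^a×X}(S) = V∘,*, where (A∘, G∘, C∘, H∘) realizes A ∘ Σ and V∘,*, V^{g,*} are the consistent subspaces of A ∘ Σ and G. -/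

import Mathlib

/-- A linear system in driving variable form `ẋ = A x + G d`, `w = C x`, `0 = H x`. -/
structure DVSystem (X W D Y : Type)
    [AddCommGroup X] [Module ℝ X] [AddCommGroup W] [Module ℝ W]
    [AddCommGroup D] [Module ℝ D] [AddCommGroup Y] [Module ℝ Y] where
  A : X →ₗ[ℝ] X
  G : D →ₗ[ℝ] X
  C : X →ₗ[ℝ] W
  H : X →ₗ[ℝ] Y

namespace DVSystem

section basic

variable {X W D Y : Type}
  [AddCommGroup X] [Module ℝ X] [AddCommGroup W] [Module ℝ W]
  [AddCommGroup D] [Module ℝ D] [AddCommGroup Y] [Module ℝ Y]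

/-- A subspace `U` is consistent-admissible if `A U ⊆ U + im G` and `U ⊆ ker H`. -/
def Admissible (P : DVSystem X W D Y) (U : Submodule ℝ X) : Prop :=
  U.map P.A ≤ U ⊔ LinearMap.range P.G ∧ U ≤ LinearMap.ker P.H

/-- The consistent subspace `V*`: the largest consistent-admissible subspace. -/
def V (P : DVSystem X W D Y) : Submodule ℝ X :=
  sSup {U | P.Admissible U}

end basic

section sim

variable {W : Type} [AddCommGroup W] [Module ℝ W]
variable {X₁ D₁ Y₁ : Type} [AddCommGroup X₁] [Module ℝ X₁]
  [AddCommGroup D₁] [Module ℝ D₁] [AddCommGroup Y₁] [Module ℝ Y₁]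
variable {X₂ D₂ Y₂ : Type} [AddCommGroup X₂] [Module ℝ X₂]
  [AddCommGroup D₂] [Module ℝ D₂] [AddCommGroup Y₂] [Module ℝ Y₂]

/-- Items (i)-(ii) of the (algebraic) definition of a simulation relation. -/
def SimConds (P₁ : DVSystem X₁ W D₁ Y₁) (P₂ : DVSystem X₂ W D₂ Y₂)
    (S : Submodule ℝ (X₁ × X₂)) : Prop :=
  ∀ x₁ x₂, (x₁, x₂) ∈ S →
    (∀ d₁ : D₁, P₁.A x₁ + P₁.G d₁ ∈ P₁.V →
      ∃ d₂ : D₂, P₂.A x₂ + P₂.G d₂ ∈ P₂.V ∧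
        (P₁.A x₁ + P₁.G d₁, P₂.A x₂ + P₂.G d₂) ∈ S) ∧
    P₁.C x₁ = P₂.C x₂

/-- `S` is a simulation relation of `P₁` by `P₂`. -/
def IsSimRel (P₁ : DVSystem X₁ W D₁ Y₁) (P₂ : DVSystem X₂ W D₂ Y₂)
    (S : Submodule ℝ (X₁ × X₂)) : Prop :=
  S.map (LinearMap.fst ℝ X₁ X₂) ≤ P₁.V ∧ S.map (LinearMap.snd ℝ X₁ X₂) ≤ P₂.V ∧
    SimConds P₁ P₂ S

/-- `S` is a full simulation relation of `P₁` by `P₂`: in addition `π₁(S) = V₁*`. -/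
def IsFullSimRel (P₁ : DVSystem X₁ W D₁ Y₁) (P₂ : DVSystem X₂ W D₂ Y₂)
    (S : Submodule ℝ (X₁ × X₂)) : Prop :=
  IsSimRel P₁ P₂ S ∧ S.map (LinearMap.fst ℝ X₁ X₂) = P₁.V

/-- `P₁ ≼ P₂`: `P₁` is simulated by `P₂`. -/
def Simulates (P₁ : DVSystem X₁ W D₁ Y₁) (P₂ : DVSystem X₂ W D₂ Y₂) : Prop :=
  ∃ S : Submodule ℝ (X₁ × X₂), IsFullSimRel P₁ P₂ S

/-- The composition `P₁ ∘ P₂` obtained by sharing the external variable `w₁ = w₂`. -/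
noncomputable def comp (P₁ : DVSystem X₁ W D₁ Y₁) (P₂ : DVSystem X₂ W D₂ Y₂) :
    DVSystem (X₁ × X₂) W (D₁ × D₂) (Y₁ × Y₂ × W) where
  A := P₁.A.prodMap P₂.A
  G := P₁.G.prodMap P₂.G
  C := (1/2 : ℝ) • (P₁.C ∘ₗ LinearMap.fst ℝ X₁ X₂ + P₂.C ∘ₗ LinearMap.snd ℝ X₁ X₂)
  H := (P₁.H ∘ₗ LinearMap.fst ℝ X₁ X₂).prod
    ((P₂.H ∘ₗ LinearMap.snd ℝ X₁ X₂).prod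
      (P₁.C ∘ₗ LinearMap.fst ℝ X₁ X₂ - P₂.C ∘ₗ LinearMap.snd ℝ X₁ X₂))

end sim

section relcomp

variable {X₁ X₂ X₃ : Type} [AddCommGroup X₁] [Module ℝ X₁]
  [AddCommGroup X₂] [Module ℝ X₂] [AddCommGroup X₃] [Module ℝ X₃]

/-- Composition of linear relations:
`{(x₁, x₃) | ∃ x₂, (x₁, x₂) ∈ S₁₂ ∧ (x₂, x₃) ∈ S₂₃}`. -/
def relComp (S₁₂ : Submodule ℝ (X₁ × X₂)) (S₂₃ : Submodule ℝ (X₂ × X₃)) :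
    Submodule ℝ (X₁ × X₃) where
  carrier := {p | ∃ x₂, (p.1, x₂) ∈ S₁₂ ∧ (x₂, p.2) ∈ S₂₃}
  zero_mem' := ⟨0, S₁₂.zero_mem, S₂₃.zero_mem⟩
  add_mem' := by
    rintro a b ⟨y, hy1, hy2⟩ ⟨z, hz1, hz2⟩
    exact ⟨y + z, S₁₂.add_mem hy1 hz1, S₂₃.add_mem hy2 hz2⟩
  smul_mem' := by
    rintro c a ⟨y, h1, h2⟩
    exact ⟨c • y, S₁₂.smul_mem c h1, S₂₃.smul_mem c h2⟩

/-- The pairing `{(x, (x₁, x₂)) | (x, x₁) ∈ S₁ ∧ (x, x₂) ∈ S₂}` of two relations. -/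
def pairRel (S₁ : Submodule ℝ (X₁ × X₂)) (S₂ : Submodule ℝ (X₁ × X₃)) :
    Submodule ℝ (X₁ × X₂ × X₃) where
  carrier := {p | (p.1, p.2.1) ∈ S₁ ∧ (p.1, p.2.2) ∈ S₂}
  zero_mem' := ⟨S₁.zero_mem, S₂.zero_mem⟩
  add_mem' := by
    rintro a b ⟨ha1, ha2⟩ ⟨hb1, hb2⟩
    exact ⟨S₁.add_mem ha1 hb1, S₂.add_mem ha2 hb2⟩
  smul_mem' := by
    rintro c a ⟨h1, h2⟩
    exact ⟨S₁.smul_mem c h1, S₂.smul_mem c h2⟩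

end relcomp

section contract

variable {W : Type} [AddCommGroup W] [Module ℝ W]
variable {X D Y Xa Da Ya Xg Dg Yg : Type}
  [AddCommGroup X] [Module ℝ X] [AddCommGroup D] [Module ℝ D]
  [AddCommGroup Y] [Module ℝ Y]
  [AddCommGroup Xa] [Module ℝ Xa] [AddCommGroup Da] [Module ℝ Da]
  [AddCommGroup Ya] [Module ℝ Ya]
  [AddCommGroup Xg] [Module ℝ Xg] [AddCommGroup Dg] [Module ℝ Dg]
  [AddCommGroup Yg] [Module ℝ Yg]

/-- `Sys` implements the contract `(Ass, Gar)` if `E ∘ Sys ≼ Gar` for every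
compatible environment `E`, i.e., every environment with `E ≼ Ass`. -/
def Implements (Sys : DVSystem X W D Y)
    (Ass : DVSystem Xa W Da Ya) (Gar : DVSystem Xg W Dg Yg) : Prop :=
  ∀ (Xe De Ye : Type) [AddCommGroup Xe] [Module ℝ Xe] [FiniteDimensional ℝ Xe]
    [AddCommGroup De] [Module ℝ De] [FiniteDimensional ℝ De]
    [AddCommGroup Ye] [Module ℝ Ye] [FiniteDimensional ℝ Ye]
    (E : DVSystem Xe W De Ye),
    Simulates E Ass → Simulates (comp E Sys) Gar

end contract

section refine

variable {W : Type} [AddCommGroup W] [Module ℝ W]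
variable {Xa Da Ya Xg Dg Yg Xa' Da' Ya' Xg' Dg' Yg' : Type}
  [AddCommGroup Xa] [Module ℝ Xa] [AddCommGroup Da] [Module ℝ Da]
  [AddCommGroup Ya] [Module ℝ Ya]
  [AddCommGroup Xg] [Module ℝ Xg] [AddCommGroup Dg] [Module ℝ Dg]
  [AddCommGroup Yg] [Module ℝ Yg]
  [AddCommGroup Xa'] [Module ℝ Xa'] [AddCommGroup Da'] [Module ℝ Da']
  [AddCommGroup Ya'] [Module ℝ Ya']
  [AddCommGroup Xg'] [Module ℝ Xg'] [AddCommGroup Dg'] [Module ℝ Dg']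
  [AddCommGroup Yg'] [Module ℝ Yg']

/-- The contract `(Ass', Gar')` refines the contract `(Ass, Gar)`:
`Ass ≼ Ass'` and `Ass ∘ Gar' ≼ Gar`. -/
def Refines (Ass' : DVSystem Xa' W Da' Ya') (Gar' : DVSystem Xg' W Dg' Yg')
    (Ass : DVSystem Xa W Da Ya) (Gar : DVSystem Xg W Dg Yg) : Prop :=
  Simulates Ass Ass' ∧ Simulates (comp Ass Gar') Gar

end refine

end DVSystem

/-!
Simulation is a preorder (the diagonal of `V*` is a full simulation relation, and full
simulation relations compose), and it is preserved by composing both sides with a fixed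
system `Q`: a relation `S` of `P₁` by `P₂` lifts to `{((x₁, x), (x₂, x)) | (x₁, x₂) ∈ S}`,
cut down to the consistent subspace of `P₁ ∘ Q`. Since the assumptions are themselves a
compatible environment, and every compatible environment `E` gives `E ∘ Σ ≼ A ∘ Σ`, the system
`Σ` implements `(A, G)` exactly when `A ∘ Σ ≼ G`.

It remains to see that full simulation relations are the subspaces satisfying (12)–(14). Given
(12), every pair in `S` has some successor in `S`; another admissible successor of the first
component differs from it by a direction `G₁ d` in `V₁*`, and (13) says exactly that such a
direction can be matched by `P₂` inside `S`.
-/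

section linearAlgebra

variable {R M M₁ M₂ N N₁ N₂ P : Type*} [Ring R]
  [AddCommGroup M] [Module R M] [AddCommGroup M₁] [Module R M₁] [AddCommGroup M₂] [Module R M₂]
  [AddCommGroup N] [Module R N] [AddCommGroup N₁] [Module R N₁] [AddCommGroup N₂] [Module R N₂]
  [AddCommGroup P] [Module R P]

theorem mem_sup_range_iff {U : Submodule R M} {G : N →ₗ[R] M} {x : M} :
    x ∈ U ⊔ LinearMap.range G ↔ ∃ d, x + G d ∈ U := by
  constructor
  · intro h
    obtain ⟨u, hu, _, ⟨d, rfl⟩, rfl⟩ := Submodule.mem_sup.1 h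
    exact ⟨-d, by simpa using hu⟩
  · rintro ⟨d, hd⟩
    exact Submodule.mem_sup.2 ⟨_, hd, G (-d), ⟨-d, rfl⟩, by simp⟩

theorem map_le_sup_range_iff {U : Submodule R M₁} {U' : Submodule R M} {A : M₁ →ₗ[R] M}
    {G : N →ₗ[R] M} :
    U.map A ≤ U' ⊔ LinearMap.range G ↔ ∀ x ∈ U, ∃ d, A x + G d ∈ U' := by
  rw [Submodule.map_le_iff_le_comap, SetLike.le_def]
  simp only [Submodule.mem_comap, mem_sup_range_iff]

theorem prod_range_inf_bot_le_sup_iff {S : Submodule R (M₁ × M₂)}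
    {U₁ : Submodule R M₁} {U₂ : Submodule R M₂} {G₁ : N₁ →ₗ[R] M₁} {G₂ : N₂ →ₗ[R] M₂} :
    (LinearMap.range G₁ ⊓ U₁).prod ⊥ ≤ S ⊔ (⊥ : Submodule R M₁).prod (LinearMap.range G₂ ⊓ U₂) ↔
      ∀ d₁, G₁ d₁ ∈ U₁ → ∃ d₂, G₂ d₂ ∈ U₂ ∧ (G₁ d₁, G₂ d₂) ∈ S := by
  constructor
  · intro h d₁ hd₁
    obtain ⟨⟨t₁, t₂⟩, ht, ⟨b₁, b₂⟩, ⟨hb₁, ⟨f, rfl⟩, hf⟩, hsum⟩ :=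
      Submodule.mem_sup.1 (h (x := (G₁ d₁, 0)) ⟨⟨⟨d₁, rfl⟩, hd₁⟩, Submodule.zero_mem _⟩)
    obtain rfl : b₁ = 0 := (Submodule.mem_bot R).1 hb₁
    simp only [Prod.mk_add_mk, add_zero, Prod.mk.injEq] at hsum
    obtain ⟨rfl, ht₂⟩ := hsum
    refine ⟨-f, by simpa using hf, ?_⟩
    simpa [eq_neg_of_add_eq_zero_left ht₂] using ht
  · rintro h ⟨_, x₂⟩ ⟨⟨⟨d₁, rfl⟩, hd₁⟩, hx₂⟩
    obtain rfl : x₂ = 0 := (Submodule.mem_bot R).1 hx₂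
    obtain ⟨d₂, hd₂, hS⟩ := h d₁ hd₁
    exact Submodule.mem_sup.2
      ⟨_, hS, (0, G₂ (-d₂)), ⟨rfl, ⟨-d₂, rfl⟩, by simpa using hd₂⟩, by simp⟩

theorem le_prod_ker_inf_ker_sub_iff {S : Submodule R (M₁ × M₂)}
    {H₁ : M₁ →ₗ[R] N₁} {H₂ : M₂ →ₗ[R] N₂} {C₁ : M₁ →ₗ[R] P} {C₂ : M₂ →ₗ[R] P} :
    S ≤ (LinearMap.ker H₁).prod (LinearMap.ker H₂) ⊓
        LinearMap.ker (C₁ ∘ₗ LinearMap.fst R M₁ M₂ - C₂ ∘ₗ LinearMap.snd R M₁ M₂) ↔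
      ∀ x₁ x₂, (x₁, x₂) ∈ S → H₁ x₁ = 0 ∧ H₂ x₂ = 0 ∧ C₁ x₁ = C₂ x₂ := by
  simp [SetLike.le_def, sub_eq_zero, and_assoc]

end linearAlgebra

namespace DVSystem

section consistent

variable {X W D Y : Type}
  [AddCommGroup X] [Module ℝ X] [AddCommGroup W] [Module ℝ W]
  [AddCommGroup D] [Module ℝ D] [AddCommGroup Y] [Module ℝ Y]
  {P : DVSystem X W D Y} {U : Submodule ℝ X}

theorem admissible_iff :
    P.Admissible U ↔ (∀ x ∈ U, ∃ d, P.A x + P.G d ∈ U) ∧ ∀ x ∈ U, P.H x = 0 := by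
  rw [Admissible, map_le_sup_range_iff]
  rfl

theorem Admissible.le_V (h : P.Admissible U) : U ≤ P.V :=
  le_sSup h

theorem admissible_V (P : DVSystem X W D Y) : P.Admissible P.V := by
  refine ⟨?_, sSup_le fun U hU => hU.2⟩
  rw [Submodule.map_le_iff_le_comap]
  exact sSup_le fun U hU =>
    Submodule.map_le_iff_le_comap.1 (hU.1.trans (sup_le_sup_right (le_sSup hU) _))

theorem exists_A_add_G_mem_V {x : X} (hx : x ∈ P.V) : ∃ d, P.A x + P.G d ∈ P.V :=
  (admissible_iff.1 P.admissible_V).1 x hx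

theorem H_eq_zero_of_mem_V {x : X} (hx : x ∈ P.V) : P.H x = 0 :=
  (admissible_iff.1 P.admissible_V).2 x hx

end consistent

section comp

variable {W : Type} [AddCommGroup W] [Module ℝ W]
variable {X₁ D₁ Y₁ : Type} [AddCommGroup X₁] [Module ℝ X₁]
  [AddCommGroup D₁] [Module ℝ D₁] [AddCommGroup Y₁] [Module ℝ Y₁]
variable {X₂ D₂ Y₂ : Type} [AddCommGroup X₂] [Module ℝ X₂]
  [AddCommGroup D₂] [Module ℝ D₂] [AddCommGroup Y₂] [Module ℝ Y₂]
variable (P₁ : DVSystem X₁ W D₁ Y₁) (P₂ : DVSystem X₂ W D₂ Y₂)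

@[simp]
theorem comp_C_apply (x : X₁ × X₂) :
    (comp P₁ P₂).C x = (1 / 2 : ℝ) • (P₁.C x.1 + P₂.C x.2) := rfl

theorem comp_H_eq_zero_iff {x : X₁ × X₂} :
    (comp P₁ P₂).H x = 0 ↔ P₁.H x.1 = 0 ∧ P₂.H x.2 = 0 ∧ P₁.C x.1 = P₂.C x.2 := by
  simp [comp, sub_eq_zero]

theorem map_fst_V_comp_le : (comp P₁ P₂).V.map (LinearMap.fst ℝ X₁ X₂) ≤ P₁.V := by
  refine Admissible.le_V (admissible_iff.2 ⟨?_, ?_⟩)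
  · rintro _ ⟨x, hx, rfl⟩
    obtain ⟨d, hd⟩ := exists_A_add_G_mem_V hx
    exact ⟨d.1, ⟨_, hd, rfl⟩⟩
  · rintro _ ⟨x, hx, rfl⟩
    exact ((comp_H_eq_zero_iff P₁ P₂).1 (H_eq_zero_of_mem_V hx)).1

end comp

section geometric

variable {W : Type} [AddCommGroup W] [Module ℝ W]
variable {X₁ D₁ Y₁ : Type} [AddCommGroup X₁] [Module ℝ X₁]
  [AddCommGroup D₁] [Module ℝ D₁] [AddCommGroup Y₁] [Module ℝ Y₁]
variable {X₂ D₂ Y₂ : Type} [AddCommGroup X₂] [Module ℝ X₂]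
  [AddCommGroup D₂] [Module ℝ D₂] [AddCommGroup Y₂] [Module ℝ Y₂]
variable {P₁ : DVSystem X₁ W D₁ Y₁} {P₂ : DVSystem X₂ W D₂ Y₂} {S : Submodule ℝ (X₁ × X₂)}

theorem IsSimRel.map_prodMap_le (h : IsSimRel P₁ P₂ S) :
    S.map (P₁.A.prodMap P₂.A) ≤ S ⊔ LinearMap.range (P₁.G.prodMap P₂.G) := by
  refine map_le_sup_range_iff.2 fun ⟨x₁, x₂⟩ hx => ?_
  obtain ⟨d₁, hd₁⟩ := exists_A_add_G_mem_V (h.1 ⟨_, hx, rfl⟩)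
  obtain ⟨d₂, -, hS⟩ := (h.2.2 x₁ x₂ hx).1 d₁ hd₁
  exact ⟨(d₁, d₂), hS⟩

theorem IsSimRel.prod_le_sup_prod (h : IsSimRel P₁ P₂ S) :
    (LinearMap.range P₁.G ⊓ P₁.V).prod ⊥ ≤
      S ⊔ (⊥ : Submodule ℝ X₁).prod (LinearMap.range P₂.G ⊓ P₂.V) := by
  refine prod_range_inf_bot_le_sup_iff.2 fun d₁ hd₁ => ?_
  simpa using (h.2.2 0 0 S.zero_mem).1 d₁ (by simpa using hd₁)

theorem IsSimRel.le_prod_ker_inf_ker (h : IsSimRel P₁ P₂ S) :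
    S ≤ (LinearMap.ker P₁.H).prod (LinearMap.ker P₂.H) ⊓
      LinearMap.ker (P₁.C ∘ₗ LinearMap.fst ℝ X₁ X₂ - P₂.C ∘ₗ LinearMap.snd ℝ X₁ X₂) :=
  le_prod_ker_inf_ker_sub_iff.2 fun _ _ hx =>
    ⟨H_eq_zero_of_mem_V (h.1 ⟨_, hx, rfl⟩), H_eq_zero_of_mem_V (h.2.1 ⟨_, hx, rfl⟩),
      (h.2.2 _ _ hx).2⟩

section

variable (h12 : S.map (P₁.A.prodMap P₂.A) ≤ S ⊔ LinearMap.range (P₁.G.prodMap P₂.G))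
  (h13 : (LinearMap.range P₁.G ⊓ P₁.V).prod ⊥ ≤
    S ⊔ (⊥ : Submodule ℝ X₁).prod (LinearMap.range P₂.G ⊓ P₂.V))
  (h14 : S ≤ (LinearMap.ker P₁.H).prod (LinearMap.ker P₂.H) ⊓
    LinearMap.ker (P₁.C ∘ₗ LinearMap.fst ℝ X₁ X₂ - P₂.C ∘ₗ LinearMap.snd ℝ X₁ X₂))
include h12 h14

theorem map_snd_le_V_of_geometric : S.map (LinearMap.snd ℝ X₁ X₂) ≤ P₂.V := by
  refine Admissible.le_V (admissible_iff.2 ⟨?_, ?_⟩)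
  · rintro _ ⟨⟨x₁, x₂⟩, hx, rfl⟩
    obtain ⟨d, hd⟩ := map_le_sup_range_iff.1 h12 _ hx
    exact ⟨d.2, _, hd, rfl⟩
  · rintro _ ⟨⟨x₁, x₂⟩, hx, rfl⟩
    exact (le_prod_ker_inf_ker_sub_iff.1 h14 x₁ x₂ hx).2.1

include h13 in
theorem isSimRel_of_geometric (hfst : S.map (LinearMap.fst ℝ X₁ X₂) ≤ P₁.V) :
    IsSimRel P₁ P₂ S := by
  have hsnd := map_snd_le_V_of_geometric h12 h14
  refine ⟨hfst, hsnd, fun x₁ x₂ hx => ⟨fun d₁ hd₁ => ?_,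
    (le_prod_ker_inf_ker_sub_iff.1 h14 x₁ x₂ hx).2.2⟩⟩
  obtain ⟨⟨e₁, e₂⟩, he⟩ := map_le_sup_range_iff.1 h12 _ hx
  have hG : P₁.G (d₁ - e₁) ∈ P₁.V := by
    convert sub_mem hd₁ (hfst ⟨_, he, rfl⟩) using 1
    simp [map_sub]
  obtain ⟨f, -, hf⟩ := prod_range_inf_bot_le_sup_iff.1 h13 _ hG
  have hstep : (P₁.A x₁ + P₁.G d₁, P₂.A x₂ + P₂.G (e₂ + f)) ∈ S := by
    convert S.add_mem he hf using 1
    simp [add_assoc]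
  exact ⟨e₂ + f, hsnd ⟨_, hstep, rfl⟩, hstep⟩

end

theorem isFullSimRel_iff : IsFullSimRel P₁ P₂ S ↔
    S.map (P₁.A.prodMap P₂.A) ≤ S ⊔ LinearMap.range (P₁.G.prodMap P₂.G) ∧
    (LinearMap.range P₁.G ⊓ P₁.V).prod ⊥ ≤
      S ⊔ (⊥ : Submodule ℝ X₁).prod (LinearMap.range P₂.G ⊓ P₂.V) ∧
    S ≤ (LinearMap.ker P₁.H).prod (LinearMap.ker P₂.H) ⊓
      LinearMap.ker (P₁.C ∘ₗ LinearMap.fst ℝ X₁ X₂ - P₂.C ∘ₗ LinearMap.snd ℝ X₁ X₂) ∧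
    S.map (LinearMap.fst ℝ X₁ X₂) = P₁.V :=
  ⟨fun ⟨h, hfull⟩ => ⟨h.map_prodMap_le, h.prod_le_sup_prod, h.le_prod_ker_inf_ker, hfull⟩,
    fun ⟨h12, h13, h14, hfull⟩ => ⟨isSimRel_of_geometric h12 h13 h14 hfull.le, hfull⟩⟩

end geometric

section preorder

variable {W : Type} [AddCommGroup W] [Module ℝ W]
variable {X₁ D₁ Y₁ : Type} [AddCommGroup X₁] [Module ℝ X₁]
  [AddCommGroup D₁] [Module ℝ D₁] [AddCommGroup Y₁] [Module ℝ Y₁]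
variable {X₂ D₂ Y₂ : Type} [AddCommGroup X₂] [Module ℝ X₂]
  [AddCommGroup D₂] [Module ℝ D₂] [AddCommGroup Y₂] [Module ℝ Y₂]
variable {X₃ D₃ Y₃ : Type} [AddCommGroup X₃] [Module ℝ X₃]
  [AddCommGroup D₃] [Module ℝ D₃] [AddCommGroup Y₃] [Module ℝ Y₃]

theorem simulates_refl (P : DVSystem X₁ W D₁ Y₁) : Simulates P P := by
  refine ⟨P.V.map (LinearMap.id.prod LinearMap.id), ⟨?_, ?_, ?_⟩, ?_⟩
  · rintro _ ⟨_, ⟨x, hx, rfl⟩, rfl⟩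
    exact hx
  · rintro _ ⟨_, ⟨x, hx, rfl⟩, rfl⟩
    exact hx
  · rintro x₁ x₂ ⟨x, -, hx⟩
    obtain ⟨rfl, rfl⟩ := Prod.ext_iff.1 hx
    exact ⟨fun d hd => ⟨d, hd, _, hd, rfl⟩, rfl⟩
  · ext x
    simp

theorem Simulates.trans {P₁ : DVSystem X₁ W D₁ Y₁} {P₂ : DVSystem X₂ W D₂ Y₂}
    {P₃ : DVSystem X₃ W D₃ Y₃} (h₁₂ : Simulates P₁ P₂) (h₂₃ : Simulates P₂ P₃) :
    Simulates P₁ P₃ := by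
  obtain ⟨S₁₂, ⟨hfst₁₂, hsnd₁₂, hsim₁₂⟩, hfull₁₂⟩ := h₁₂
  obtain ⟨S₂₃, ⟨-, hsnd₂₃, hsim₂₃⟩, hfull₂₃⟩ := h₂₃
  refine ⟨relComp S₁₂ S₂₃, ⟨?_, ?_, ?_⟩, le_antisymm ?_ ?_⟩
  · rintro _ ⟨_, ⟨x₂, h₁₂, -⟩, rfl⟩
    exact hfst₁₂ ⟨_, h₁₂, rfl⟩
  · rintro _ ⟨_, ⟨x₂, -, h₂₃⟩, rfl⟩
    exact hsnd₂₃ ⟨_, h₂₃, rfl⟩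
  · rintro x₁ x₃ ⟨x₂, h₁₂, h₂₃⟩
    refine ⟨fun d₁ hd₁ => ?_, (hsim₁₂ _ _ h₁₂).2.trans (hsim₂₃ _ _ h₂₃).2⟩
    obtain ⟨d₂, hd₂, h₁₂'⟩ := (hsim₁₂ _ _ h₁₂).1 d₁ hd₁
    obtain ⟨d₃, hd₃, h₂₃'⟩ := (hsim₂₃ _ _ h₂₃).1 d₂ hd₂
    exact ⟨d₃, hd₃, _, h₁₂', h₂₃'⟩
  · rintro _ ⟨_, ⟨x₂, h₁₂, -⟩, rfl⟩
    exact hfst₁₂ ⟨_, h₁₂, rfl⟩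
  · intro x₁ hx₁
    obtain ⟨⟨_, x₂⟩, h₁₂, rfl⟩ := hfull₁₂.ge hx₁
    obtain ⟨⟨_, x₃⟩, h₂₃, rfl⟩ := hfull₂₃.ge (hsnd₁₂ ⟨_, h₁₂, rfl⟩)
    exact ⟨(_, x₃), ⟨_, h₁₂, h₂₃⟩, rfl⟩

end preorder

section liftRel

variable {W : Type} [AddCommGroup W] [Module ℝ W]
variable {X₁ D₁ Y₁ : Type} [AddCommGroup X₁] [Module ℝ X₁]
  [AddCommGroup D₁] [Module ℝ D₁] [AddCommGroup Y₁] [Module ℝ Y₁]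
variable {X₂ D₂ Y₂ : Type} [AddCommGroup X₂] [Module ℝ X₂]
  [AddCommGroup D₂] [Module ℝ D₂] [AddCommGroup Y₂] [Module ℝ Y₂]
variable {X D Y : Type} [AddCommGroup X] [Module ℝ X]
  [AddCommGroup D] [Module ℝ D] [AddCommGroup Y] [Module ℝ Y]

def liftRel (S : Submodule ℝ (X₁ × X₂)) (V : Submodule ℝ (X₁ × X)) :
    Submodule ℝ ((X₁ × X) × (X₂ × X)) :=
  S.comap ((LinearMap.fst ℝ X₁ X).prodMap (LinearMap.fst ℝ X₂ X)) ⊓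
    V.comap (LinearMap.fst ℝ (X₁ × X) (X₂ × X)) ⊓
    LinearMap.ker (LinearMap.snd ℝ X₁ X ∘ₗ LinearMap.fst ℝ (X₁ × X) (X₂ × X) -
      LinearMap.snd ℝ X₂ X ∘ₗ LinearMap.snd ℝ (X₁ × X) (X₂ × X))

variable {S : Submodule ℝ (X₁ × X₂)} {V : Submodule ℝ (X₁ × X)}

@[simp]
theorem mem_liftRel {x₁ : X₁} {x₂ : X₂} {x x' : X} :
    ((x₁, x), (x₂, x')) ∈ liftRel S V ↔ (x₁, x₂) ∈ S ∧ (x₁, x) ∈ V ∧ x = x' := by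
  simp [liftRel, sub_eq_zero, and_assoc]

theorem map_fst_liftRel_le : (liftRel S V).map (LinearMap.fst ℝ (X₁ × X) (X₂ × X)) ≤ V := by
  rintro _ ⟨⟨⟨x₁, x⟩, ⟨x₂, x'⟩⟩, hp, rfl⟩
  exact (mem_liftRel.1 hp).2.1

end liftRel

section compRight

variable {W : Type} [AddCommGroup W] [Module ℝ W]
variable {X₁ D₁ Y₁ : Type} [AddCommGroup X₁] [Module ℝ X₁]
  [AddCommGroup D₁] [Module ℝ D₁] [AddCommGroup Y₁] [Module ℝ Y₁]
variable {X₂ D₂ Y₂ : Type} [AddCommGroup X₂] [Module ℝ X₂]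
  [AddCommGroup D₂] [Module ℝ D₂] [AddCommGroup Y₂] [Module ℝ Y₂]
variable {X D Y : Type} [AddCommGroup X] [Module ℝ X]
  [AddCommGroup D] [Module ℝ D] [AddCommGroup Y] [Module ℝ Y]
variable {P₁ : DVSystem X₁ W D₁ Y₁} {P₂ : DVSystem X₂ W D₂ Y₂} {Q : DVSystem X W D Y}
  {S : Submodule ℝ (X₁ × X₂)}

theorem SimConds.exists_step_mem_liftRel (hS : SimConds P₁ P₂ S) {x₁ : X₁} {x₂ : X₂} {x : X}
    (hx : ((x₁, x), (x₂, x)) ∈ liftRel S (comp P₁ Q).V) {d₁ : D₁} {d : D}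
    (hd : (P₁.A x₁ + P₁.G d₁, Q.A x + Q.G d) ∈ (comp P₁ Q).V) :
    ∃ d₂, ((P₁.A x₁ + P₁.G d₁, Q.A x + Q.G d), (P₂.A x₂ + P₂.G d₂, Q.A x + Q.G d)) ∈
      liftRel S (comp P₁ Q).V := by
  obtain ⟨d₂, -, hnext⟩ :=
    (hS _ _ (mem_liftRel.1 hx).1).1 d₁ (map_fst_V_comp_le P₁ Q ⟨_, hd, rfl⟩)
  exact ⟨d₂, mem_liftRel.2 ⟨hnext, hd, rfl⟩⟩

theorem IsSimRel.map_snd_liftRel_le (h : IsSimRel P₁ P₂ S) :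
    (liftRel S (comp P₁ Q).V).map (LinearMap.snd ℝ (X₁ × X) (X₂ × X)) ≤ (comp P₂ Q).V := by
  refine Admissible.le_V (admissible_iff.2 ⟨?_, ?_⟩)
  · rintro _ ⟨⟨⟨x₁, x⟩, ⟨x₂, x'⟩⟩, hp, rfl⟩
    obtain ⟨-, hV, rfl⟩ := mem_liftRel.1 hp
    obtain ⟨⟨d₁, d⟩, hd⟩ := exists_A_add_G_mem_V hV
    obtain ⟨d₂, hnext⟩ := h.2.2.exists_step_mem_liftRel hp hd
    exact ⟨(d₂, d), _, hnext, rfl⟩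
  · rintro _ ⟨⟨⟨x₁, x⟩, ⟨x₂, x'⟩⟩, hp, rfl⟩
    obtain ⟨hS, hV, rfl⟩ := mem_liftRel.1 hp
    obtain ⟨-, hQ, hC⟩ := (comp_H_eq_zero_iff P₁ Q).1 (H_eq_zero_of_mem_V hV)
    refine (comp_H_eq_zero_iff P₂ Q).2 ⟨H_eq_zero_of_mem_V (h.2.1 ⟨_, hS, rfl⟩), hQ, ?_⟩
    exact (h.2.2 _ _ hS).2.symm.trans hC

theorem Simulates.comp_right (h : Simulates P₁ P₂) (Q : DVSystem X W D Y) :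
    Simulates (comp P₁ Q) (comp P₂ Q) := by
  obtain ⟨S, hS, hfull⟩ := h
  refine ⟨liftRel S (comp P₁ Q).V, ⟨map_fst_liftRel_le, hS.map_snd_liftRel_le, ?_⟩,
    le_antisymm map_fst_liftRel_le ?_⟩
  · rintro ⟨x₁, x⟩ ⟨x₂, x'⟩ hp
    obtain ⟨hx, -, rfl⟩ := mem_liftRel.1 hp
    refine ⟨fun ⟨d₁, d⟩ hd => ?_, by simp [(hS.2.2 _ _ hx).2]⟩
    obtain ⟨d₂, hnext⟩ := hS.2.2.exists_step_mem_liftRel hp hd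
    exact ⟨(d₂, d), hS.map_snd_liftRel_le ⟨_, hnext, rfl⟩, hnext⟩
  · rintro ⟨x₁, x⟩ hV
    obtain ⟨⟨_, x₂⟩, hx, rfl⟩ := hfull.ge (map_fst_V_comp_le P₁ Q ⟨_, hV, rfl⟩)
    exact ⟨((_, x), (x₂, x)), mem_liftRel.2 ⟨hx, hV, rfl⟩, rfl⟩

end compRight

theorem implements_iff_simulates_comp {W X D Y Xa Da Ya Xg Dg Yg : Type}
    [AddCommGroup W] [Module ℝ W] [AddCommGroup X] [Module ℝ X]
    [AddCommGroup D] [Module ℝ D] [AddCommGroup Y] [Module ℝ Y]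
    [AddCommGroup Xa] [Module ℝ Xa] [FiniteDimensional ℝ Xa]
    [AddCommGroup Da] [Module ℝ Da] [FiniteDimensional ℝ Da]
    [AddCommGroup Ya] [Module ℝ Ya] [FiniteDimensional ℝ Ya]
    [AddCommGroup Xg] [Module ℝ Xg] [AddCommGroup Dg] [Module ℝ Dg]
    [AddCommGroup Yg] [Module ℝ Yg]
    (Sys : DVSystem X W D Y) (Ass : DVSystem Xa W Da Ya) (Gar : DVSystem Xg W Dg Yg) :
    Implements Sys Ass Gar ↔ Simulates (comp Ass Sys) Gar :=
  ⟨fun h => h Xa Da Ya Ass (simulates_refl Ass),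
    fun h _ _ _ _ _ _ _ _ _ _ _ _ _ hE => (hE.comp_right Sys).trans h⟩

end DVSystem

open DVSystem

theorem implements_iff_exists_geometric_general {W : Type} [AddCommGroup W] [Module ℝ W]
    {X D Y : Type} [AddCommGroup X] [Module ℝ X]
    [AddCommGroup D] [Module ℝ D]
    [AddCommGroup Y] [Module ℝ Y]
    {Xa Da Ya : Type} [AddCommGroup Xa] [Module ℝ Xa] [FiniteDimensional ℝ Xa]
    [AddCommGroup Da] [Module ℝ Da] [FiniteDimensional ℝ Da]
    [AddCommGroup Ya] [Module ℝ Ya] [FiniteDimensional ℝ Ya]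
    {Xg Dg Yg : Type} [AddCommGroup Xg] [Module ℝ Xg]
    [AddCommGroup Dg] [Module ℝ Dg]
    [AddCommGroup Yg] [Module ℝ Yg]
    (Sys : DVSystem X W D Y) (Ass : DVSystem Xa W Da Ya) (Gar : DVSystem Xg W Dg Yg) :
    Implements Sys Ass Gar ↔
      ∃ S : Submodule ℝ ((Xa × X) × Xg),
        S.map (((comp Ass Sys).A).prodMap Gar.A) ≤
          S ⊔ LinearMap.range (((comp Ass Sys).G).prodMap Gar.G) ∧
        Submodule.prod (LinearMap.range (comp Ass Sys).G ⊓ (comp Ass Sys).V)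
            (⊥ : Submodule ℝ Xg) ≤
          S ⊔ Submodule.prod (⊥ : Submodule ℝ (Xa × X))
            (LinearMap.range Gar.G ⊓ Gar.V) ∧
        S ≤ Submodule.prod (LinearMap.ker (comp Ass Sys).H) (LinearMap.ker Gar.H) ⊓
          LinearMap.ker ((comp Ass Sys).C ∘ₗ LinearMap.fst ℝ (Xa × X) Xg -
            Gar.C ∘ₗ LinearMap.snd ℝ (Xa × X) Xg) ∧
        S.map (LinearMap.fst ℝ (Xa × X) Xg) = (comp Ass Sys).V :=
  (implements_iff_simulates_comp Sys Ass Gar).trans (exists_congr fun _ => isFullSimRel_iff)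

/-- Verification of contract implementation: `Σ` implements `(Ass, Gar)` iff there is
a subspace `S` satisfying (12), (13), (14) whose first projection is all of `V∘,*`. -/
theorem implements_iff_exists_geometric {W : Type} [AddCommGroup W] [Module ℝ W] [FiniteDimensional ℝ W]
    {X D Y : Type} [AddCommGroup X] [Module ℝ X] [FiniteDimensional ℝ X]
    [AddCommGroup D] [Module ℝ D] [FiniteDimensional ℝ D]
    [AddCommGroup Y] [Module ℝ Y] [FiniteDimensional ℝ Y]
    {Xa Da Ya : Type} [AddCommGroup Xa] [Module ℝ Xa] [FiniteDimensional ℝ Xa]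
    [AddCommGroup Da] [Module ℝ Da] [FiniteDimensional ℝ Da]
    [AddCommGroup Ya] [Module ℝ Ya] [FiniteDimensional ℝ Ya]
    {Xg Dg Yg : Type} [AddCommGroup Xg] [Module ℝ Xg] [FiniteDimensional ℝ Xg]
    [AddCommGroup Dg] [Module ℝ Dg] [FiniteDimensional ℝ Dg]
    [AddCommGroup Yg] [Module ℝ Yg] [FiniteDimensional ℝ Yg]
    (Sys : DVSystem X W D Y) (Ass : DVSystem Xa W Da Ya) (Gar : DVSystem Xg W Dg Yg) :
    Implements Sys Ass Gar ↔
      ∃ S : Submodule ℝ ((Xa × X) × Xg),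
        S.map (((comp Ass Sys).A).prodMap Gar.A) ≤
          S ⊔ LinearMap.range (((comp Ass Sys).G).prodMap Gar.G) ∧
        Submodule.prod (LinearMap.range (comp Ass Sys).G ⊓ (comp Ass Sys).V)
            (⊥ : Submodule ℝ Xg) ≤
          S ⊔ Submodule.prod (⊥ : Submodule ℝ (Xa × X))
            (LinearMap.range Gar.G ⊓ Gar.V) ∧
        S ≤ Submodule.prod (LinearMap.ker (comp Ass Sys).H) (LinearMap.ker Gar.H) ⊓
          LinearMap.ker ((comp Ass Sys).C ∘ₗ LinearMap.fst ℝ (Xa × X) Xg -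
            Gar.C ∘ₗ LinearMap.snd ℝ (Xa × X) Xg) ∧
        S.map (LinearMap.fst ℝ (Xa × X) Xg) = (comp Ass Sys).V :=
  implements_iff_exists_geometric_general Sys Ass Gar
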